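/- Let H be a k-uniform hypergraph with m edges, no isolated vertices, and maximum degree Δ. Then λ_1(H) ≥ km/(km - Δ). -/

import Mathlib

open Finset

variable {n : ℕ}

def hdeg (E : Finset (Finset (Fin n))) (v : Fin n) : ℕ :=
  (E.filter fun e => v ∈ e).card

def codeg (E : Finset (Finset (Fin n))) (u v : Fin n) : ℕ :=
  (E.filter fun e => u ∈ e ∧ v ∈ e).card

noncomputable def adjMat (E : Finset (Finset (Fin n))) : Matrix (Fin n) (Fin n) ℝ :=
  fun u v => if u = v then 0
    else ∑ e ∈ E.filter (fun e => u ∈ e ∧ v ∈ e), (1 : ℝ) / ((e.card : ℝ) - 1)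

noncomputable def lapMat (E : Finset (Finset (Fin n))) : Matrix (Fin n) (Fin n) ℝ :=
  Matrix.diagonal (fun v => (hdeg E v : ℝ)) - adjMat E

noncomputable def normLap (E : Finset (Finset (Fin n))) : Matrix (Fin n) (Fin n) ℝ :=
  Matrix.diagonal (fun v => (hdeg E v : ℝ) ^ (-(1/2) : ℝ)) * lapMat E *
    Matrix.diagonal (fun v => (hdeg E v : ℝ) ^ (-(1/2) : ℝ))

noncomputable def eigsAsc (M : Matrix (Fin n) (Fin n) ℝ) : Fin n → ℝ :=
  if h : M.IsHermitian then (h.eigenvalues ∘ Tuple.sort h.eigenvalues) else 0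

noncomputable def lamMax {n : ℕ} (M : Matrix (Fin n) (Fin n) ℝ) : ℝ :=
  ⨆ i, eigsAsc M i

noncomputable def volR {n : ℕ} (E : Finset (Finset (Fin n))) (S : Finset (Fin n)) : ℝ :=
  ∑ v ∈ S, (hdeg E v : ℝ)

noncomputable def bndR {n : ℕ} (E : Finset (Finset (Fin n))) (S : Finset (Fin n)) : ℝ :=
  ∑ u ∈ S, ∑ v ∈ Sᶜ, (codeg E u v : ℝ)


/-!
Evaluate the Rayleigh quotient of the normalized Laplacian at `x v = √(d v) * g v`, where `d` is
the degree, `g = K • 𝟙_{v₀} - Δ • 𝟙`, `K = k m` and `v₀` is a vertex of maximum degree `Δ`.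
Every edge has at least two vertices, so `L 𝟙 = 0` and `gᵀ L g = K² L v₀ v₀ = K² Δ`; and since
`∑ v, d v = k m = K`, `xᵀ x = ∑ v, d v (g v)² = K Δ² + Δ (K² - 2 K Δ) = K Δ (K - Δ)`.
The quotient is `K / (K - Δ)`, and the largest eigenvalue dominates every Rayleigh quotient.
-/

open Matrix

namespace Matrix.IsHermitian

variable {ι : Type*} [Fintype ι] [DecidableEq ι] {M : Matrix ι ι ℝ}

theorem posSemidef_smul_one_sub (hM : M.IsHermitian) {c : ℝ}
    (hc : ∀ i, hM.eigenvalues i ≤ c) :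
    (c • 1 - M).PosSemidef := by
  have hshift : c • 1 - M = hM.eigenvectorUnitary * diagonal (fun i => c - hM.eigenvalues i) *
      star (hM.eigenvectorUnitary : Matrix ι ι ℝ) := by
    have hdiag : diagonal (fun i => c - hM.eigenvalues i) =
        c • 1 - diagonal (RCLike.ofReal ∘ hM.eigenvalues) := by
      ext i j; by_cases h : i = j <;> simp [h, diagonal]
    conv_lhs => rw [hM.spectral_theorem, Unitary.conjStarAlgAut_apply]
    rw [hdiag, mul_sub, sub_mul, mul_smul_comm, mul_one, smul_mul_assoc,
      Unitary.mul_star_self_of_mem hM.eigenvectorUnitary.2]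
  rw [hshift, Unitary.isUnit_coe.posSemidef_star_right_conjugate_iff, posSemidef_diagonal_iff]
  exact fun i => sub_nonneg.2 (hc i)

theorem dotProduct_mulVec_le (hM : M.IsHermitian) {c : ℝ} (hc : ∀ i, hM.eigenvalues i ≤ c)
    (x : ι → ℝ) : x ⬝ᵥ (M *ᵥ x) ≤ c * (x ⬝ᵥ x) := by
  have := (hM.posSemidef_smul_one_sub hc).dotProduct_mulVec_nonneg x
  simpa [sub_mulVec, smul_mulVec, dotProduct_sub, dotProduct_smul] using this

end Matrix.IsHermitian

section QuadraticForm

variable {ι R : Type*} [Fintype ι] [DecidableEq ι] [CommRing R]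

theorem Matrix.IsSymm.dotProduct_mulVec_single_add_smul_one {A : Matrix ι ι R} (hA : A.IsSymm)
    (hA1 : A *ᵥ 1 = 0) (i : ι) (a b : R) :
    (Pi.single i a + b • 1) ⬝ᵥ (A *ᵥ (Pi.single i a + b • 1)) = A i i * a ^ 2 := by
  have h1A : 1 ᵥ* A = 0 := by rw [← mulVec_transpose, hA.eq, hA1]
  rw [mulVec_add, mulVec_smul, hA1, smul_zero, add_zero, add_dotProduct, smul_dotProduct,
    dotProduct_mulVec 1, h1A, zero_dotProduct, smul_zero, add_zero, single_dotProduct,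
    mulVec_single, Pi.smul_apply, col_apply, op_smul_eq_mul]
  ring

theorem Matrix.dotProduct_diagonal_mul_mul_diagonal_mulVec (d : ι → R) (A : Matrix ι ι R)
    (x : ι → R) : x ⬝ᵥ ((diagonal d * A * diagonal d) *ᵥ x) =
      (diagonal d *ᵥ x) ⬝ᵥ (A *ᵥ (diagonal d *ᵥ x)) := by
  rw [← mulVec_mulVec, ← mulVec_mulVec, dotProduct_mulVec x (diagonal d), ← mulVec_transpose,
    diagonal_transpose]

theorem sum_mul_single_add_smul_one_sq (d : ι → R) (i : ι) (a b : R) :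
    ∑ v, d v * (Pi.single i a + b • 1 : ι → R) v ^ 2 =
      (∑ v, d v) * b ^ 2 + d i * (a ^ 2 + 2 * a * b) := by
  have : ∀ v, d v * (Pi.single i a + b • 1 : ι → R) v ^ 2 =
      d v * b ^ 2 + if v = i then d i * (a ^ 2 + 2 * a * b) else 0 := by
    intro v
    by_cases h : v = i
    · subst h
      simp only [Pi.add_apply, Pi.single_eq_same, Pi.smul_apply, Pi.one_apply, smul_eq_mul,
        mul_one, if_true]
      ring
    · simp [h]
  rw [sum_congr rfl fun v _ => this v, sum_add_distrib, ← sum_mul, sum_ite_eq',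
    if_pos (mem_univ i)]

end QuadraticForm

theorem dotProduct_self_sqrt_mul {ι : Type*} [Fintype ι] {d : ι → ℝ} (hd : ∀ v, 0 ≤ d v)
    (g : ι → ℝ) :
    (fun v => √(d v) * g v) ⬝ᵥ (fun v => √(d v) * g v) = ∑ v, d v * g v ^ 2 := by
  refine sum_congr rfl fun v _ => ?_
  rw [mul_mul_mul_comm, Real.mul_self_sqrt (hd v), sq]

theorem eigenvalues_le_lamMax {M : Matrix (Fin n) (Fin n) ℝ} (hM : M.IsHermitian) (i : Fin n) :
    hM.eigenvalues i ≤ lamMax M := by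
  have : hM.eigenvalues i = eigsAsc M ((Tuple.sort hM.eigenvalues)⁻¹ i) := by
    rw [eigsAsc, dif_pos hM]
    simp
  exact this ▸ le_ciSup (Set.finite_range _).bddAbove _

theorem dotProduct_mulVec_le_lamMax {M : Matrix (Fin n) (Fin n) ℝ} (hM : M.IsHermitian)
    (x : Fin n → ℝ) : x ⬝ᵥ (M *ᵥ x) ≤ lamMax M * (x ⬝ᵥ x) :=
  hM.dotProduct_mulVec_le (eigenvalues_le_lamMax hM) x

theorem adjMat_isHermitian (E : Finset (Finset (Fin n))) : (adjMat E).IsHermitian := by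
  ext u v
  by_cases h : u = v
  · simp [adjMat, h]
  · simp [adjMat, h, Ne.symm h, and_comm]

theorem lapMat_isHermitian (E : Finset (Finset (Fin n))) : (lapMat E).IsHermitian :=
  (isHermitian_diagonal _).sub (adjMat_isHermitian E)

theorem normLap_isHermitian (E : Finset (Finset (Fin n))) : (normLap E).IsHermitian := by
  have h := isHermitian_mul_mul_conjTranspose
    (diagonal fun v => (hdeg E v : ℝ) ^ (-(1/2) : ℝ)) (lapMat_isHermitian E)
  rwa [(isHermitian_diagonal _).eq] at h

theorem sum_hdeg (E : Finset (Finset (Fin n))) : ∑ v, hdeg E v = ∑ e ∈ E, e.card := by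
  simp only [hdeg, card_eq_sum_ones, sum_filter]
  rw [sum_comm]
  simp

theorem sum_adjMat_row {E : Finset (Finset (Fin n))} (hE : ∀ e ∈ E, 2 ≤ e.card) (u : Fin n) :
    ∑ v, adjMat E u v = hdeg E u := by
  have hrow : ∀ v, adjMat E u v =
      ∑ e ∈ E with u ∈ e, if v ∈ e.erase u then 1 / ((e.card : ℝ) - 1) else 0 := by
    intro v
    by_cases h : u = v
    · simp [adjMat, h]
    · simp [adjMat, h, Ne.symm h, sum_filter, ← ite_and]
  rw [sum_congr rfl fun v _ => hrow v, sum_comm, hdeg, card_eq_sum_ones, Nat.cast_sum]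
  refine sum_congr rfl fun e he => ?_
  obtain ⟨heE, hue⟩ := mem_filter.1 he
  have hcard : (1 : ℝ) < e.card := by exact_mod_cast hE e heE
  rw [sum_ite_mem, univ_inter, sum_const, card_erase_of_mem hue, nsmul_eq_mul,
    Nat.cast_pred (card_pos.2 ⟨u, hue⟩), Nat.cast_one]
  field_simp [(sub_pos.2 hcard).ne']

theorem lapMat_mulVec_one {E : Finset (Finset (Fin n))} (hE : ∀ e ∈ E, 2 ≤ e.card) :
    lapMat E *ᵥ 1 = 0 := by
  ext u
  have hdiag : (diagonal fun v => (hdeg E v : ℝ)) *ᵥ 1 = fun v => (hdeg E v : ℝ) := by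
    ext v; simp [mulVec_diagonal]
  have hadj : (adjMat E *ᵥ 1) u = hdeg E u := by
    simp only [mulVec, dotProduct, Pi.one_apply, mul_one, sum_adjMat_row hE]
  simp [lapMat, sub_mulVec, hdiag, hadj]

theorem lapMat_apply_self (E : Finset (Finset (Fin n))) (v : Fin n) :
    lapMat E v v = hdeg E v := by
  simp [lapMat, adjMat]

theorem dotProduct_normLap_mulVec_sqrt_hdeg_mul {E : Finset (Finset (Fin n))}
    (hiso : ∀ v, 0 < hdeg E v) (g : Fin n → ℝ) :
    (fun v => √(hdeg E v : ℝ) * g v) ⬝ᵥ (normLap E *ᵥ fun v => √(hdeg E v : ℝ) * g v) =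
      g ⬝ᵥ (lapMat E *ᵥ g) := by
  have hg : (diagonal fun v => (hdeg E v : ℝ) ^ (-(1/2) : ℝ)) *ᵥ
      (fun v => √(hdeg E v : ℝ) * g v) = g := by
    ext v
    have hsqrt : √(hdeg E v : ℝ) ≠ 0 := Real.sqrt_ne_zero'.2 (by exact_mod_cast hiso v)
    rw [mulVec_diagonal, Real.rpow_neg (Nat.cast_nonneg _), ← Real.sqrt_eq_rpow,
      inv_mul_cancel_left₀ hsqrt]
  rw [normLap, dotProduct_diagonal_mul_mul_diagonal_mulVec, hg]

theorem stmt8 (n k m Δ : ℕ) (hn : 2 ≤ n) (hk : 2 ≤ k) (E : Finset (Finset (Fin n)))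
    (hunif : ∀ e ∈ E, e.card = k) (hm : E.card = m) (hiso : ∀ v : Fin n, 0 < hdeg E v)
    (hΔ : Δ = Finset.univ.sup (hdeg E)) :
    (k : ℝ) * (m : ℝ) / ((k : ℝ) * (m : ℝ) - (Δ : ℝ)) ≤ lamMax (normLap E) := by
  have : Nonempty (Fin n) := ⟨⟨0, by omega⟩⟩
  obtain ⟨v₀, -, hv₀⟩ := exists_mem_eq_sup univ univ_nonempty (hdeg E)
  set K : ℝ := k * m
  set D : ℝ := (hdeg E v₀ : ℝ)
  have hΔD : (Δ : ℝ) = D := by rw [hΔ, hv₀]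
  have hvol : ∑ v, (hdeg E v : ℝ) = K := by
    rw [← Nat.cast_sum, sum_hdeg, sum_congr rfl hunif, sum_const, hm, smul_eq_mul, mul_comm,
      Nat.cast_mul]
  have hD : 1 ≤ D := Nat.one_le_cast.2 (hiso v₀)
  have hDK : D < K := by
    have hDm : D ≤ m := Nat.cast_le.2 (hm ▸ card_filter_le E _)
    have hk' : (2 : ℝ) ≤ k := by exact_mod_cast hk
    nlinarith
  have hray := dotProduct_mulVec_le_lamMax (normLap_isHermitian E)
    (fun v => √(hdeg E v : ℝ) * (Pi.single v₀ K + (-D) • 1 : Fin n → ℝ) v)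
  rw [dotProduct_normLap_mulVec_sqrt_hdeg_mul hiso,
    (isHermitian_iff_isSymm.1 (lapMat_isHermitian E)).dotProduct_mulVec_single_add_smul_one
      (lapMat_mulVec_one fun e he => hunif e he ▸ hk),
    lapMat_apply_self, dotProduct_self_sqrt_mul (fun v => Nat.cast_nonneg _),
    sum_mul_single_add_smul_one_sq, hvol] at hray
  rw [hΔD, div_le_iff₀ (sub_pos.2 hDK)]
  refine le_of_mul_le_mul_left ?_ (mul_pos (by linarith) (by linarith) : 0 < D * K)
  linarith
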